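/- Let Ω₁ ⊆ ℝ^p and Ω₂ ⊆ ℝ^q (p, q ≥ 2) be bounded connected open sets, and u separately subharmonic on a neighborhood of the closure of Ω₁ × Ω₂ with u ≤ M on ∂Ω₁ × ∂Ω₂. If u(a,b) = M for some (a,b) ∈ Ω₁ × Ω₂, then u ≡ M on Ω₁ × Ω₂. -/

import Mathlib

open MeasureTheory Metric Filter Topology Set

noncomputable section

variable {E : Type*} [NormedAddCommGroup E] [InnerProductSpace ℝ E]
  [MeasurableSpace E] [BorelSpace E]

/-- The mean of an extended-real-valued function over the sphere of center `x`
and radius `r`, with respect to `d`-dimensional Hausdorff measure, defined as the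
infimum of the averages of the truncations `v ⊔ (-n)`. -/
def sphereMean (d : ℝ) (v : E → EReal) (x : E) (r : ℝ) : EReal :=
  ⨅ n : ℕ, ((⨍ y in sphere x r, ((v y) ⊔ (-(n : ℝ) : EReal)).toReal ∂ μH[d] : ℝ) : EReal)

/-- `v : E → [-∞, ∞)` is subharmonic on `U` (with sphere dimension `d = N - 1`):
upper semicontinuous on `U`, `< ∞`, not identically `-∞`, and satisfying the
sub-mean value inequality on spheres of closed balls contained in `U`. -/
def IsSubharmonicOn (d : ℝ) (v : E → EReal) (U : Set E) : Prop :=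
  UpperSemicontinuousOn v U ∧ (∀ x ∈ U, v x < ⊤) ∧ (∃ x ∈ U, v x ≠ ⊥) ∧
    ∀ x r, 0 < r → closedBall x r ⊆ U → v x ≤ sphereMean d v x r

/-- `u : E → (-∞, ∞]` is superharmonic on `U` iff `-u` is subharmonic on `U`. -/
def IsSuperharmonicOn (d : ℝ) (u : E → EReal) (U : Set E) : Prop :=
  IsSubharmonicOn d (fun x => -(u x)) U

/-- A set is polar if it is contained in the `-∞`-set of a function subharmonic
on a neighborhood of it. -/
def IsPolar (d : ℝ) (S : Set E) : Prop :=
  ∃ U : Set E, IsOpen U ∧ S ⊆ U ∧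
    ∃ v : E → EReal, IsSubharmonicOn d v U ∧ ∀ x ∈ S, v x = ⊥

/-- The fine topology: the coarsest topology making every globally defined
subharmonic function continuous. -/
def fineTopology (E : Type*) [NormedAddCommGroup E] [InnerProductSpace ℝ E]
    [MeasurableSpace E] [BorelSpace E] (d : ℝ) : TopologicalSpace E :=
  ⨅ (v : E → EReal) (_ : IsSubharmonicOn d v Set.univ),
    TopologicalSpace.induced v inferInstance

/-- A set `A` is thin at `ζ` if `ζ` is not a fine limit point of `A`. -/
def ThinAt (d : ℝ) (A : Set E) (ζ : E) : Prop :=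
  ζ ∉ @closure E (fineTopology E d) (A \ {ζ})

/-- A real-valued function is harmonic on `U` if it is continuous on `U` and
satisfies the mean value equality on spheres of closed balls contained in `U`. -/
def IsHarmonicOn (d : ℝ) (h : E → ℝ) (U : Set E) : Prop :=
  ContinuousOn h U ∧ ∀ x r, 0 < r → closedBall x r ⊆ U →
    h x = ⨍ y in sphere x r, h y ∂ μH[d]

/-- An open set is Greenian if it carries a positive superharmonic function that
is not harmonic (i.e. a potential-like function exists). -/
def IsGreenian (d : ℝ) (ω : Set E) : Prop :=
  ω.Nonempty ∧ ∃ u : E → EReal, IsSuperharmonicOn d u ω ∧ (∀ x ∈ ω, 0 < u x) ∧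
    ¬ ∃ h : E → ℝ, IsHarmonicOn d h ω ∧ ∀ x ∈ ω, u x = (h x : EReal)

/-- The Perron upper class of a boundary function `f` on `ω`. -/
def upperClass (d : ℝ) (ω : Set E) (f : E → EReal) : Set (E → EReal) :=
  {u | IsSuperharmonicOn d u ω ∧ (∃ c : ℝ, ∀ x ∈ ω, (c : EReal) ≤ u x) ∧
    ∀ ζ ∈ frontier ω, f ζ ≤ Filter.liminf u (nhdsWithin ζ ω)}

/-- The upper Perron–Wiener–Brelot solution of the Dirichlet problem on `ω`
with boundary data `f`. -/
def PWB (d : ℝ) (ω : Set E) (f : E → EReal) (x : E) : EReal :=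
  ⨅ u ∈ upperClass d ω f, u x

/-- A boundary point `ζ` of `ω` is regular for the Dirichlet problem if for every
continuous boundary data the PWB solution attains the boundary value at `ζ`. -/
def IsRegularBoundaryPoint (d : ℝ) (ω : Set E) (ζ : E) : Prop :=
  ζ ∈ frontier ω ∧ ∀ f : E → ℝ, ContinuousOn f (frontier ω) →
    Filter.Tendsto (PWB d ω (fun y => (f y : EReal))) (nhdsWithin ζ ω) (nhds ((f ζ : EReal)))

/-- `A ⊆ ∂ω` is negligible for `ω` if it has harmonic measure zero, harmonic
measure being the PWB solution for the indicator boundary data. -/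
def IsNegligible (d : ℝ) (ω A : Set E) : Prop :=
  ∀ x ∈ ω, PWB d ω (fun y => ((A.indicator (fun _ => (1 : ℝ)) y : ℝ) : EReal)) x = 0


noncomputable instance prodL2MeasurableSpace (p q : ℕ) :
    MeasurableSpace (WithLp 2 (EuclideanSpace ℝ (Fin p) × EuclideanSpace ℝ (Fin q))) := borel _

instance prodL2BorelSpace (p q : ℕ) :
    BorelSpace (WithLp 2 (EuclideanSpace ℝ (Fin p) × EuclideanSpace ℝ (Fin q))) := ⟨rfl⟩

/-- The product `ℝ^p × ℝ^q` with its Euclidean (L²) structure. -/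
abbrev ProdSpace (p q : ℕ) := WithLp 2 (EuclideanSpace ℝ (Fin p) × EuclideanSpace ℝ (Fin q))

/-- The point `(a, b)` of `ℝ^p × ℝ^q`. -/
def prodMk {p q : ℕ} (a : EuclideanSpace ℝ (Fin p)) (b : EuclideanSpace ℝ (Fin q)) :
    ProdSpace p q := (WithLp.equiv 2 _).symm (a, b)

/-- The product set `Ω₁ × Ω₂` inside `ℝ^p × ℝ^q`. -/
def prodSet {p q : ℕ} (Ω₁ : Set (EuclideanSpace ℝ (Fin p)))
    (Ω₂ : Set (EuclideanSpace ℝ (Fin q))) : Set (ProdSpace p q) :=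
  (WithLp.equiv 2 _) ⁻¹' (Ω₁ ×ˢ Ω₂)

/-- `u` is separately subharmonic on `U ⊆ ℝ^p × ℝ^q` if all its partial functions
are subharmonic on the corresponding slices. -/
def SeparatelySubharmonicOn {p q : ℕ} (u : ProdSpace p q → EReal)
    (U : Set (ProdSpace p q)) : Prop :=
  ∀ a b, prodMk a b ∈ U →
    IsSubharmonicOn ((p : ℝ) - 1) (fun x => u (prodMk x b)) {x | prodMk x b ∈ U} ∧
    IsSubharmonicOn ((q : ℝ) - 1) (fun y => u (prodMk a y)) {y | prodMk a y ∈ U}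
end

/-!
If a subharmonic function `v ≤ M` takes the value `M` at the centre of a sphere, the sub-mean
value inequality forces `v = M` on the whole sphere: otherwise, by upper semicontinuity, `v` stays
below `M` on a cap, and caps have positive (and spheres finite) Hausdorff measure, which pulls the
spherical mean below `M`. So `{v = M}` is open, which gives the strong maximum principle on
connected open sets and, through a maximum of `v` on the compact closure, the weak one.

For `u`, the weak principle in `y` and then in `x` gives `u ≤ M` on `Ω₁ × Ω₂`; the strong principle
in `x` on the slice `y = b`, and then in `y` on every slice `x = const`, gives `u = M`.
-/

open Module
open scoped RealInnerProductSpace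

section SphereChart

variable {E : Type*} [NormedAddCommGroup E] [InnerProductSpace ℝ E] {x e : E} {r : ℝ}

theorem exists_eq_add_smul_of_mem_sphere (hr : 0 < r) {z : E} (hz : z ∈ sphere x r) :
    ∃ e : E, ‖e‖ = 1 ∧ z = x + r • e := by
  refine ⟨r⁻¹ • (z - x), ?_, ?_⟩
  · rw [norm_smul, ← dist_eq_norm, mem_sphere.mp hz, norm_inv, Real.norm_of_nonneg hr.le,
      inv_mul_cancel₀ hr.ne']
  · rw [smul_smul, mul_inv_cancel₀ hr.ne', one_smul, add_sub_cancel]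

/-- The hemisphere of `sphere x r` around `x + r • e`, as a graph over the hyperplane `eᗮ`. Being
Lipschitz near `0` and a right inverse of the orthogonal projection, it bounds the Hausdorff measure
of spheres from above and that of caps from below. -/
noncomputable def sphereChart (x e : E) (r : ℝ) (v : (ℝ ∙ e)ᗮ) : E :=
  x + √(r ^ 2 - ‖v‖ ^ 2) • e + v

theorem sphereChart_zero (hr : 0 ≤ r) : sphereChart x e r 0 = x + r • e := by
  simp [sphereChart, Real.sqrt_sq hr]

theorem sphereChart_mem_sphere (he : ‖e‖ = 1) {v : (ℝ ∙ e)ᗮ} (hv : ‖v‖ ≤ r) :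
    sphereChart x e r v ∈ sphere x r := by
  have hve : ⟪e, (v : E)⟫ = 0 := Submodule.mem_orthogonal_singleton_iff_inner_right.mp v.2
  have hsq : ‖√(r ^ 2 - ‖v‖ ^ 2) • e + v‖ ^ 2 = r ^ 2 := by
    rw [norm_add_sq_real, real_inner_smul_left, hve, norm_smul, he, mul_one, Real.norm_eq_abs,
      sq_abs, Real.sq_sqrt (by nlinarith [norm_nonneg v]), Submodule.coe_norm]
    ring
  rw [mem_sphere, dist_eq_norm, sphereChart, add_assoc, add_sub_cancel_left]
  nlinarith [norm_nonneg (√(r ^ 2 - ‖v‖ ^ 2) • e + (v : E)), norm_nonneg v]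

theorem orthogonalProjectionOnto_sphereChart_sub (v : (ℝ ∙ e)ᗮ) :
    (ℝ ∙ e)ᗮ.orthogonalProjectionOnto (sphereChart x e r v - x) = v := by
  rw [sphereChart, add_assoc, add_sub_cancel_left, map_add, map_smul,
    Submodule.orthogonalProjectionOnto_orthogonalComplement_singleton_eq_zero,
    Submodule.orthogonalProjectionOnto_mem_subspace_eq_self, smul_zero, zero_add]

theorem sphereChart_orthogonalProjectionOnto_sub (he : ‖e‖ = 1) {w : E} (hw : w ∈ sphere x r)
    (hpos : 0 ≤ ⟪e, w - x⟫) :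
    sphereChart x e r ((ℝ ∙ e)ᗮ.orthogonalProjectionOnto (w - x)) = w := by
  set v := (ℝ ∙ e)ᗮ.orthogonalProjectionOnto (w - x)
  have hsplit : (v : E) = (w - x) - ⟪e, w - x⟫ • e := by
    rw [← Submodule.starProjection_apply, Submodule.starProjection_orthogonal_val,
      Submodule.starProjection_unit_singleton ℝ he]
  have hnorm : ‖v‖ ^ 2 = r ^ 2 - ⟪e, w - x⟫ ^ 2 := by
    have hve : ⟪e, (v : E)⟫ = 0 := Submodule.mem_orthogonal_singleton_iff_inner_right.mp v.2
    have hpyth := norm_add_sq_real (⟪e, w - x⟫ • e) (v : E)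
    rw [real_inner_smul_left, hve, norm_smul, he, mul_one, Real.norm_eq_abs, sq_abs, hsplit,
      add_sub_cancel, ← dist_eq_norm, mem_sphere.mp hw] at hpyth
    rw [Submodule.coe_norm, hsplit]
    linarith
  rw [sphereChart, hnorm, sub_sub_cancel, Real.sqrt_sq hpos, hsplit]
  abel

theorem contDiffAt_sphereChart_zero (hr : r ≠ 0) : ContDiffAt ℝ 1 (sphereChart x e r) 0 := by
  have hsqrt : ContDiffAt ℝ 1 (fun v : (ℝ ∙ e)ᗮ => √(r ^ 2 - ‖v‖ ^ 2)) 0 :=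
    ((contDiff_const.sub (contDiff_norm_sq ℝ)).contDiffAt).sqrt (by simpa using hr)
  exact (contDiffAt_const.add (hsqrt.smul contDiffAt_const)).add
    (ℝ ∙ e)ᗮ.subtypeL.contDiff.contDiffAt

end SphereChart

section SphereMeasure

variable {E : Type*} [NormedAddCommGroup E] [InnerProductSpace ℝ E] [MeasurableSpace E]
  [BorelSpace E] {m : ℕ} {x e : E} {r : ℝ}

theorem isAddHaarMeasure_hausdorffMeasure_orthogonal_span_singleton
    (hE : finrank ℝ E = m + 1) (he : e ≠ 0) :
    Measure.IsAddHaarMeasure (μH[m] : Measure (ℝ ∙ e)ᗮ) := by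
  have : Fact (finrank ℝ E = m + 1) := ⟨hE⟩
  have : FiniteDimensional ℝ E := .of_fact_finrank_eq_succ m
  rw [← Submodule.finrank_orthogonal_span_singleton (𝕜 := ℝ) (n := m) he]
  infer_instance

theorem finiteAtFilter_hausdorffMeasure_sphere (hE : finrank ℝ E = m + 1) (hr : 0 < r)
    (he : ‖e‖ = 1) : (μH[m] : Measure E).FiniteAtFilter (𝓝[sphere x r] (x + r • e)) := by
  have : FiniteDimensional ℝ E := .of_finrank_eq_succ hE
  have := isAddHaarMeasure_hausdorffMeasure_orthogonal_span_singleton hE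
    (norm_ne_zero_iff.mp (he.trans_ne one_ne_zero))
  set P := (ℝ ∙ e)ᗮ.orthogonalProjectionOnto
  obtain ⟨C, t, ht, hlip⟩ :=
    (contDiffAt_sphereChart_zero (x := x) (e := e) hr.ne').exists_lipschitzOnWith
  set s := t ∩ closedBall 0 1
  have hP : P (x + r • e - x) = 0 := by
    rw [add_sub_cancel_left, map_smul,
      Submodule.orthogonalProjectionOnto_orthogonalComplement_singleton_eq_zero, smul_zero]
  have hpos : 0 < ⟪e, x + r • e - x⟫ := by
    rwa [add_sub_cancel_left, real_inner_smul_right, real_inner_self_eq_norm_sq, he, one_pow,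
      mul_one]
  have hN : {w | 0 < ⟪e, w - x⟫} ∩ (fun w => P (w - x)) ⁻¹' s ∈ 𝓝 (x + r • e) := by
    refine inter_mem ((isOpen_lt continuous_const (by fun_prop)).mem_nhds hpos) ?_
    refine (P.continuous.comp (continuous_sub_right x)).continuousAt.preimage_mem_nhds ?_
    rw [Function.comp_apply, hP]
    exact inter_mem ht (closedBall_mem_nhds 0 one_pos)
  refine ⟨_, inter_mem_nhdsWithin _ hN, ?_⟩
  calc μH[m] (sphere x r ∩ ({w | 0 < ⟪e, w - x⟫} ∩ (fun w => P (w - x)) ⁻¹' s))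
      ≤ μH[m] (sphereChart x e r '' s) :=
        measure_mono fun w ⟨hw, hwpos, hws⟩ =>
          ⟨P (w - x), hws, sphereChart_orthogonalProjectionOnto_sub he hw hwpos.le⟩
    _ ≤ C ^ (m : ℝ) * μH[m] s :=
        (hlip.mono inter_subset_left).hausdorffMeasure_image_le (Nat.cast_nonneg m)
    _ < ⊤ := ENNReal.mul_lt_top (ENNReal.rpow_lt_top_of_nonneg (Nat.cast_nonneg m)
        ENNReal.coe_ne_top) ((measure_mono inter_subset_right).trans_lt measure_closedBall_lt_top)

theorem hausdorffMeasure_sphere_lt_top (hE : finrank ℝ E = m + 1) (x : E) (r : ℝ) :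
    μH[m] (sphere x r) < ⊤ := by
  rcases le_or_gt r 0 with hr | hr
  · exact (Measure.hausdorffMeasure_le_one_of_subsingleton (subsingleton_sphere x hr)
      (Nat.cast_nonneg m)).trans_lt ENNReal.one_lt_top
  have : FiniteDimensional ℝ E := .of_finrank_eq_succ hE
  refine (isCompact_sphere x r).measure_lt_top_of_nhdsWithin fun z hz => ?_
  obtain ⟨e, he, rfl⟩ := exists_eq_add_smul_of_mem_sphere hr hz
  exact finiteAtFilter_hausdorffMeasure_sphere hE hr he

theorem hausdorffMeasure_sphere_inter_ball_pos (hE : finrank ℝ E = m + 1) (hr : 0 < r) {z : E}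
    (hz : z ∈ sphere x r) {δ : ℝ} (hδ : 0 < δ) : 0 < μH[m] (sphere x r ∩ ball z δ) := by
  obtain ⟨e, he, rfl⟩ := exists_eq_add_smul_of_mem_sphere hr hz
  have := isAddHaarMeasure_hausdorffMeasure_orthogonal_span_singleton hE
    (norm_ne_zero_iff.mp (he.trans_ne one_ne_zero))
  set P := (ℝ ∙ e)ᗮ.orthogonalProjectionOnto
  have hcont := (contDiffAt_sphereChart_zero (x := x) (e := e) hr.ne').continuousAt
  rw [Metric.continuousAt_iff, sphereChart_zero hr.le] at hcont
  obtain ⟨ε, hε, hchart⟩ := hcont δ hδ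
  have hsub : ball 0 (min ε r) ⊆ (fun w => P (w - x)) '' (sphere x r ∩ ball (x + r • e) δ) := by
    intro v hv
    rw [mem_ball_zero_iff, lt_min_iff] at hv
    refine ⟨sphereChart x e r v, ⟨sphereChart_mem_sphere he hv.2.le, ?_⟩,
      orthogonalProjectionOnto_sphereChart_sub v⟩
    exact hchart (by rw [dist_zero_right]; exact hv.1)
  have hlip : LipschitzWith 1 fun w => P (w - x) := by
    have := (Submodule.lipschitzWith_orthogonalProjectionOnto (ℝ ∙ e)ᗮ).comp
      (IsometryEquiv.subRight x).isometry.lipschitz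
    rwa [mul_one] at this
  calc 0 < μH[m] (ball (0 : (ℝ ∙ e)ᗮ) (min ε r)) := measure_ball_pos _ _ (lt_min hε hr)
    _ ≤ μH[m] ((fun w => P (w - x)) '' (sphere x r ∩ ball (x + r • e) δ)) := measure_mono hsub
    _ ≤ μH[m] (sphere x r ∩ ball (x + r • e) δ) := by
      simpa using hlip.hausdorffMeasure_image_le (Nat.cast_nonneg m) _

end SphereMeasure

theorem setAverage_lt_of_ae_le_of_lt {α : Type*} [MeasurableSpace α] {μ : Measure α}
    {s t : Set α} {f : α → ℝ} {M : ℝ} (hμs : μ s ≠ ⊤) (hf : IntegrableOn f s μ)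
    (hle : ∀ᵐ x ∂μ.restrict s, f x ≤ M) (hts : t ⊆ s) (ht : μ t ≠ 0)
    (hlt : ∀ x ∈ t, f x < M) : ⨍ x in s, f x ∂μ < M := by
  by_contra! hM
  have : IsFiniteMeasure (μ.restrict s) := isFiniteMeasure_restrict.2 hμs
  have hzero : ∫ x in s, (⨍ a in s, f a ∂μ - f x) ∂μ = 0 := by
    rw [← neg_eq_zero, ← integral_neg, ← integral_sub_average (μ.restrict s) f]
    simp
  refine hzero.not_gt ((setIntegral_pos_iff_support_of_nonneg_ae ?_ ?_).2 ?_)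
  · filter_upwards [hle] with x hx
    simp only [Pi.zero_apply, sub_nonneg]
    exact hx.trans hM
  · exact (integrableOn_const hμs).sub hf
  · refine (pos_iff_ne_zero.2 ht).trans_le (measure_mono fun x hx => ⟨?_, hts hx⟩)
    exact (sub_pos.2 ((hlt x hx).trans_le hM)).ne'

theorem EReal.toReal_sup_coe_mem_Icc {x : EReal} {a b : ℝ} (hx : x ≤ b) (hab : a ≤ b) :
    (x ⊔ (a : EReal)).toReal ∈ Icc a b := by
  have hb : x ⊔ (a : EReal) ≤ b := sup_le hx (EReal.coe_le_coe_iff.2 hab)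
  have hbot : x ⊔ (a : EReal) ≠ ⊥ := ne_bot_of_le_ne_bot (EReal.coe_ne_bot a) le_sup_right
  have htop : x ⊔ (a : EReal) ≠ ⊤ := ne_top_of_le_ne_top (EReal.coe_ne_top b) hb
  refine ⟨EReal.coe_le_coe_iff.1 ?_, EReal.coe_le_coe_iff.1 ?_⟩ <;>
    rw [EReal.coe_toReal htop hbot]
  exacts [le_sup_right, hb]

theorem UpperSemicontinuousOn.aemeasurable_restrict {α β : Type*} [TopologicalSpace α]
    [MeasurableSpace α] [OpensMeasurableSpace α] [TopologicalSpace β] [LinearOrder β]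
    [OrderTopology β] [SecondCountableTopology β] [MeasurableSpace β] [BorelSpace β]
    {μ : Measure α} {f : α → β} {s : Set α} (hf : UpperSemicontinuousOn f s)
    (hs : MeasurableSet s) : AEMeasurable f (μ.restrict s) :=
  aemeasurable_restrict_of_measurable_subtype hs
    (upperSemicontinuousOn_iff_restrict.2 hf).measurable

theorem UpperSemicontinuousWithinAt.le_of_mem_closure {α β : Type*} [TopologicalSpace α]
    [LinearOrder β] {f : α → β} {W Ω : Set α} {ζ : α} {c : β}
    (hf : UpperSemicontinuousWithinAt f W ζ) (hΩW : Ω ⊆ W) (hζ : ζ ∈ closure Ω)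
    (h : ∀ x ∈ Ω, c ≤ f x) : c ≤ f ζ := by
  by_contra! hlt
  have : (𝓝[Ω] ζ).NeBot := mem_closure_iff_nhdsWithin_neBot.1 hζ
  obtain ⟨x, hxc, hxΩ⟩ :=
    (((hf c hlt).filter_mono (nhdsWithin_mono ζ hΩW)).and self_mem_nhdsWithin).exists
  exact (h x hxΩ).not_gt hxc

section Subharmonic

variable {E : Type*} [NormedAddCommGroup E] [InnerProductSpace ℝ E] [MeasurableSpace E]
  [BorelSpace E] {m : ℕ} {v : E → EReal} {W Ω : Set E}

theorem eqOn_sphere_of_le_sphereMean (hE : finrank ℝ E = m + 1) {y : E} {s : ℝ} (hs : 0 < s)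
    {M : ℝ} (husc : UpperSemicontinuousOn v (sphere y s)) (hle : ∀ w ∈ sphere y s, v w ≤ M)
    (hmean : (M : EReal) ≤ sphereMean m v y s) : EqOn v (fun _ => (M : EReal)) (sphere y s) := by
  intro z hz
  by_contra hne
  obtain ⟨t, hzt, htM⟩ := EReal.exists_between_coe_real ((hle z hz).lt_of_ne hne)
  have htM : t < M := EReal.coe_lt_coe_iff.1 htM
  obtain ⟨n, hn⟩ := exists_nat_ge (-t)
  set g := fun w => (v w ⊔ (-(n : ℝ) : EReal)).toReal
  have hg : ∀ w ∈ sphere y s, g w ∈ Icc (-(n : ℝ)) M := fun w hw =>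
    EReal.toReal_sup_coe_mem_Icc (hle w hw) (by linarith)
  obtain ⟨δ, hδ, hcap⟩ := Metric.mem_nhdsWithin_iff.1 (husc z hz t hzt)
  have hgt : ∀ w ∈ sphere y s ∩ ball z δ, g w < M := fun w hw =>
    (EReal.toReal_sup_coe_mem_Icc (hcap ⟨hw.2, hw.1⟩).le (by linarith)).2.trans_lt htM
  have hS : MeasurableSet (sphere y s) := isClosed_sphere.measurableSet
  -- over a set of infinite measure, `⨍` would take the junk value `0`
  have hfin := hausdorffMeasure_sphere_lt_top hE y s
  have : IsFiniteMeasure ((μH[m] : Measure E).restrict (sphere y s)) :=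
    isFiniteMeasure_restrict.2 hfin.ne
  have hint : IntegrableOn g (sphere y s) μH[m] := by
    refine Integrable.of_bound ?_ (max |(-(n : ℝ))| |M|) ?_
    · exact (measurable_ereal_toReal.comp_aemeasurable
        ((husc.aemeasurable_restrict hS).sup_const _)).aestronglyMeasurable
    · exact ae_restrict_of_forall_mem hS fun w hw => abs_le_max_abs_abs (hg w hw).1 (hg w hw).2
  have hlt := setAverage_lt_of_ae_le_of_lt hfin.ne hint
    (ae_restrict_of_forall_mem hS fun w hw => (hg w hw).2) inter_subset_left
    (hausdorffMeasure_sphere_inter_ball_pos hE hs hz hδ).ne' hgt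
  exact hlt.not_ge (EReal.coe_le_coe_iff.1 (hmean.trans (iInf_le _ n)))

theorem IsSubharmonicOn.eq_of_isMaxOn (hv : IsSubharmonicOn m v W) (hE : finrank ℝ E = m + 1)
    (hΩ : IsOpen Ω) (hconn : IsPreconnected Ω) (hΩW : Ω ⊆ W) {a : E} (ha : a ∈ Ω)
    (hmax : IsMaxOn v Ω a) : ∀ x ∈ Ω, v x = v a := by
  obtain ⟨husc, hlt_top, -, hmean⟩ := hv
  rcases eq_bot_or_bot_lt (v a) with hbot | hbot
  · exact fun x hx => hbot ▸ le_bot_iff.1 (hbot ▸ hmax hx)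
  obtain ⟨M, haM⟩ : ∃ M : ℝ, v a = M :=
    ⟨(v a).toReal, (EReal.coe_toReal (hlt_top a (hΩW ha)).ne hbot.ne').symm⟩
  have hle : ∀ x ∈ Ω, v x ≤ M := fun x hx => haM ▸ hmax hx
  have hEq : IsOpen {x ∈ Ω | v x = M} := by
    refine Metric.isOpen_iff.2 fun y ⟨hyΩ, hyM⟩ => ?_
    obtain ⟨ε, hε, hball⟩ := Metric.isOpen_iff.1 hΩ y hyΩ
    refine ⟨ε, hε, fun z hz => ⟨hball hz, ?_⟩⟩
    rcases eq_or_ne z y with rfl | hzy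
    · exact hyM
    have hclosed : closedBall y (dist z y) ⊆ Ω :=
      (closedBall_subset_ball (mem_ball.1 hz)).trans hball
    exact eqOn_sphere_of_le_sphereMean hE (dist_pos.2 hzy)
      (husc.mono (sphere_subset_closedBall.trans (hclosed.trans hΩW)))
      (fun w hw => hle w (hclosed (sphere_subset_closedBall hw)))
      (hyM ▸ hmean y _ (dist_pos.2 hzy) (hclosed.trans hΩW)) (mem_sphere.2 rfl)
  have hLt : IsOpen {x ∈ Ω | v x < M} := by
    obtain ⟨u, hu, hΩu⟩ := upperSemicontinuousOn_iff_preimage_Iio.1 (husc.mono hΩW) (M : EReal)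
    exact (show {x ∈ Ω | v x < M} = Ω ∩ u from hΩu) ▸ hΩ.inter hu
  rw [haM]
  by_contra! hx
  obtain ⟨x, hxΩ, hxM⟩ := hx
  obtain ⟨w, -, ⟨-, hw⟩, ⟨-, hw'⟩⟩ := hconn _ _ hEq hLt
    (fun x hx => (hle x hx).eq_or_lt.imp (⟨hx, ·⟩) (⟨hx, ·⟩)) ⟨a, ha, ha, haM⟩
    ⟨x, hxΩ, hxΩ, (hle x hxΩ).lt_of_ne hxM⟩
  exact hw'.ne hw

theorem IsSubharmonicOn.le_of_forall_mem_frontier_le (hv : IsSubharmonicOn m v W)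
    (hE : finrank ℝ E = m + 1) (hΩ : IsOpen Ω) (hconn : IsPreconnected Ω)
    (hbdd : Bornology.IsBounded Ω) (hΩW : closure Ω ⊆ W) {c : EReal}
    (hc : ∀ ζ ∈ frontier Ω, v ζ ≤ c) : ∀ x ∈ closure Ω, v x ≤ c := by
  intro x hx
  have : FiniteDimensional ℝ E := .of_finrank_eq_succ hE
  have : Nontrivial E := nontrivial_of_finrank_eq_succ hE
  obtain ⟨x₀, hx₀, hmax⟩ := (hv.1.mono hΩW).exists_isMaxOn ⟨x, hx⟩ hbdd.isCompact_closure
  refine (hmax hx).trans ?_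
  by_cases hfr : x₀ ∈ frontier Ω
  · exact hc x₀ hfr
  have hx₀Ω : x₀ ∈ Ω := by
    rw [← hΩ.interior_eq, ← closure_sdiff_frontier]
    exact ⟨hx₀, hfr⟩
  obtain ⟨ζ, hζ⟩ : (frontier Ω).Nonempty := nonempty_frontier_iff.2
    ⟨⟨x₀, hx₀Ω⟩, fun h => NormedSpace.unbounded_univ ℝ E (h ▸ hbdd)⟩
  have hconst := hv.eq_of_isMaxOn hE hΩ hconn (subset_closure.trans hΩW) hx₀Ω
    (hmax.on_subset subset_closure)
  refine le_trans ?_ (hc ζ hζ)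
  exact UpperSemicontinuousWithinAt.le_of_mem_closure (hv.1 ζ (hΩW (frontier_subset_closure hζ)))
    (subset_closure.trans hΩW) (frontier_subset_closure hζ) fun w hw => (hconst w hw).ge

end Subharmonic

theorem prodMk_mem_closure_prodSet {p q : ℕ} {Ω₁ : Set (EuclideanSpace ℝ (Fin p))}
    {Ω₂ : Set (EuclideanSpace ℝ (Fin q))} {a : EuclideanSpace ℝ (Fin p)}
    {b : EuclideanSpace ℝ (Fin q)} (ha : a ∈ closure Ω₁) (hb : b ∈ closure Ω₂) :
    prodMk a b ∈ closure (prodSet Ω₁ Ω₂) :=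
  map_mem_closure₂ (WithLp.prod_continuous_toLp 2 _ _) ha hb fun _ ha _ hb => ⟨ha, hb⟩

theorem SeparatelySubharmonicOn.isSubharmonicOn_left {m q : ℕ}
    {u : ProdSpace (m + 1) q → EReal} {U : Set (ProdSpace (m + 1) q)}
    (hu : SeparatelySubharmonicOn u U) {a : EuclideanSpace ℝ (Fin (m + 1))}
    {b : EuclideanSpace ℝ (Fin q)} (hab : prodMk a b ∈ U) :
    IsSubharmonicOn m (fun x => u (prodMk x b)) {x | prodMk x b ∈ U} := by
  simpa using (hu a b hab).1

theorem SeparatelySubharmonicOn.isSubharmonicOn_right {p l : ℕ}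
    {u : ProdSpace p (l + 1) → EReal} {U : Set (ProdSpace p (l + 1))}
    (hu : SeparatelySubharmonicOn u U) {a : EuclideanSpace ℝ (Fin p)}
    {b : EuclideanSpace ℝ (Fin (l + 1))} (hab : prodMk a b ∈ U) :
    IsSubharmonicOn l (fun y => u (prodMk a y)) {y | prodMk a y ∈ U} := by
  simpa using (hu a b hab).2

theorem separately_subharmonic_eq_of_eq_at_interior_point_general
    (p q : ℕ) (hp : 2 ≤ p) (hq : 2 ≤ q)
    (Ω₁ : Set (EuclideanSpace ℝ (Fin p))) (Ω₂ : Set (EuclideanSpace ℝ (Fin q)))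
    (hΩ₁open : IsOpen Ω₁) (hΩ₂open : IsOpen Ω₂)
    (hΩ₁conn : IsConnected Ω₁) (hΩ₂conn : IsConnected Ω₂)
    (hΩ₁bdd : Bornology.IsBounded Ω₁) (hΩ₂bdd : Bornology.IsBounded Ω₂)
    (U : Set (ProdSpace p q))
    (hUnbhd : closure (prodSet Ω₁ Ω₂) ⊆ U)
    (u : ProdSpace p q → EReal) (hu : SeparatelySubharmonicOn u U)
    (M : ℝ) (hM : ∀ ζ ∈ frontier Ω₁, ∀ η ∈ frontier Ω₂, u (prodMk ζ η) ≤ (M : EReal))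
    (a : EuclideanSpace ℝ (Fin p)) (b : EuclideanSpace ℝ (Fin q))
    (ha : a ∈ Ω₁) (hb : b ∈ Ω₂) (hab : u (prodMk a b) = (M : EReal)) :
    ∀ x ∈ Ω₁, ∀ y ∈ Ω₂, u (prodMk x y) = (M : EReal) := by
  obtain ⟨m, rfl⟩ : ∃ m, p = m + 1 := ⟨p - 1, by omega⟩
  obtain ⟨l, rfl⟩ : ∃ l, q = l + 1 := ⟨q - 1, by omega⟩
  have hU : ∀ x ∈ closure Ω₁, ∀ y ∈ closure Ω₂, prodMk x y ∈ U := fun x hx y hy =>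
    hUnbhd (prodMk_mem_closure_prodSet hx hy)
  have hsub₁ : ∀ y ∈ closure Ω₂,
      IsSubharmonicOn m (fun x => u (prodMk x y)) {x | prodMk x y ∈ U} := fun y hy =>
    hu.isSubharmonicOn_left (hU a (subset_closure ha) y hy)
  have hsub₂ : ∀ x ∈ closure Ω₁,
      IsSubharmonicOn l (fun y => u (prodMk x y)) {y | prodMk x y ∈ U} := fun x hx =>
    hu.isSubharmonicOn_right (hU x hx b (subset_closure hb))
  have hle : ∀ x ∈ closure Ω₁, ∀ y ∈ closure Ω₂, u (prodMk x y) ≤ M := fun x hx y hy =>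
    (hsub₁ y hy).le_of_forall_mem_frontier_le finrank_euclideanSpace_fin hΩ₁open
      hΩ₁conn.isPreconnected hΩ₁bdd (fun x hx => hU x hx y hy)
      (fun ζ hζ => (hsub₂ ζ (frontier_subset_closure hζ)).le_of_forall_mem_frontier_le
        finrank_euclideanSpace_fin hΩ₂open hΩ₂conn.isPreconnected hΩ₂bdd
        (fun y hy => hU ζ (frontier_subset_closure hζ) y hy) (hM ζ hζ) y hy) x hx
  have hrow : ∀ x ∈ Ω₁, u (prodMk x b) = M := hab ▸
    (hsub₁ b (subset_closure hb)).eq_of_isMaxOn finrank_euclideanSpace_fin hΩ₁open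
      hΩ₁conn.isPreconnected (fun x hx => hU x (subset_closure hx) b (subset_closure hb)) ha
      (isMaxOn_iff.2 fun x hx => (hle x (subset_closure hx) b (subset_closure hb)).trans hab.ge)
  intro x hx y hy
  exact (hrow x hx) ▸ (hsub₂ x (subset_closure hx)).eq_of_isMaxOn finrank_euclideanSpace_fin
    hΩ₂open hΩ₂conn.isPreconnected (fun y hy => hU x (subset_closure hx) y (subset_closure hy)) hb
    (isMaxOn_iff.2 fun y hy =>
      (hle x (subset_closure hx) y (subset_closure hy)).trans (hrow x hx).ge) y hy

/-- strong maximum principle—if a separately subharmonic function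
bounded by `M` on the distinguished boundary attains the value `M` at an
interior point, it is identically `M`. -/
theorem separately_subharmonic_eq_of_eq_at_interior_point
    (p q : ℕ) (hp : 2 ≤ p) (hq : 2 ≤ q)
    (Ω₁ : Set (EuclideanSpace ℝ (Fin p))) (Ω₂ : Set (EuclideanSpace ℝ (Fin q)))
    (hΩ₁open : IsOpen Ω₁) (hΩ₂open : IsOpen Ω₂)
    (hΩ₁conn : IsConnected Ω₁) (hΩ₂conn : IsConnected Ω₂)
    (hΩ₁bdd : Bornology.IsBounded Ω₁) (hΩ₂bdd : Bornology.IsBounded Ω₂)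
    (U : Set (ProdSpace p q)) (hUopen : IsOpen U)
    (hUnbhd : closure (prodSet Ω₁ Ω₂) ⊆ U)
    (u : ProdSpace p q → EReal) (hu : SeparatelySubharmonicOn u U)
    (M : ℝ) (hM : ∀ ζ ∈ frontier Ω₁, ∀ η ∈ frontier Ω₂, u (prodMk ζ η) ≤ (M : EReal))
    (a : EuclideanSpace ℝ (Fin p)) (b : EuclideanSpace ℝ (Fin q))
    (ha : a ∈ Ω₁) (hb : b ∈ Ω₂) (hab : u (prodMk a b) = (M : EReal)) :
    ∀ x ∈ Ω₁, ∀ y ∈ Ω₂, u (prodMk x y) = (M : EReal) :=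
  separately_subharmonic_eq_of_eq_at_interior_point_general p q hp hq Ω₁ Ω₂ hΩ₁open hΩ₂open hΩ₁conn
    hΩ₂conn hΩ₁bdd hΩ₂bdd U hUnbhd u hu M hM a b ha hb hab
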